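/- Let p₀, q₀ be coprime positive integers and let a, b, m₀, d, s be nonnegative integers with m₀ ≥ 1. Suppose N₀ = a*p₀ + b*q₀ + p₀*q₀*(m₀ + s + d) and (p₀ + q₀)*m₀ ≥ N₀. Then p₀ = 1 or q₀ = 1. -/

import Mathlib

/-!
The face term gives `p₀ q₀ m₀ ≤ N₀ ≤ (p₀ + q₀) m₀`, so `p₀ q₀ ≤ p₀ + q₀`, i.e. `(p₀ - 1)(q₀ - 1) ≤ 1`.
If neither is `1`, this forces `p₀ = q₀ = 2` (or a zero, making the other `1`), contradicting coprimality.
-/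

theorem Nat.Coprime.eq_one_or_eq_one_of_mul_le_add {p q : ℕ} (hpq : p.Coprime q)
    (hle : p * q ≤ p + q) : p = 1 ∨ q = 1 := by
  rcases Nat.lt_or_ge p 2 with hp | hp
  · interval_cases p
    · exact Or.inr (Nat.coprime_zero_left q |>.mp hpq)
    · exact Or.inl rfl
  rcases Nat.lt_or_ge q 2 with hq | hq
  · interval_cases q
    · exact Or.inl (Nat.coprime_zero_right p |>.mp hpq)
    · exact Or.inr rfl
  have hp2 : p = 2 := by nlinarith
  have hq2 : q = 2 := by nlinarith
  subst hp2 hq2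
  exact absurd hpq (by decide)

theorem stmt_3 (p₀ q₀ a b m₀ d s N₀ : ℕ)
    (hcop : Nat.Coprime p₀ q₀) (hm₀ : 1 ≤ m₀)
    (hN₀ : N₀ = a * p₀ + b * q₀ + p₀ * q₀ * (m₀ + s + d))
    (h : N₀ ≤ (p₀ + q₀) * m₀) : p₀ = 1 ∨ q₀ = 1 := by
  have hface : p₀ * q₀ * m₀ ≤ N₀ := by
    rw [hN₀]
    exact le_add_left (Nat.mul_le_mul_left _ (by omega))
  have hmul : p₀ * q₀ ≤ p₀ + q₀ :=
    Nat.le_of_mul_le_mul_right (hface.trans h) hm₀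
  exact hcop.eq_one_or_eq_one_of_mul_le_add hmul
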